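/- arXiv:2202.09023 — 3 statements merged into one kernel-verified Lean document; each statement's English description precedes it below -/
import Mathlib

section
/- For every s ∈ (0, sup f), every nonempty connected component of the upper level set U_s = {x : f(x) ≥ s} contains at least one mode of f. Moreover, if x⋆ is a mode of f, then the intersection over all s ∈ (0, f(x⋆)] of the connected component of U_s containing x⋆ equals the singleton {x⋆}. -/
open Metric Set Filter MeasureTheory Topology
open scoped Topology RealInnerProductSpace

abbrev Euc (d : ℕ) := EuclideanSpace ℝ (Fin d)

/-- The Hessian of `f`, as the derivative of the gradient field. -/
noncomputable def hess {d : ℕ} (f : Euc d → ℝ) (x : Euc d) : Euc d →L[ℝ] Euc d :=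
  fderiv ℝ (gradient f) x

/-- The standing assumptions on the density `f`: nonnegative, integrable, vanishing at
infinity, twice differentiable with bounded and uniformly continuous zeroth, first and
second derivatives, and Morse (nonsingular Hessian at every critical point). -/
def IsNiceDensity {d : ℕ} (f : Euc d → ℝ) : Prop :=
  (∀ x, 0 ≤ f x) ∧
  Integrable f volume ∧
  Tendsto f (cocompact (Euc d)) (𝓝 0) ∧
  Differentiable ℝ f ∧
  Differentiable ℝ (gradient f) ∧
  (∃ M, ∀ x, |f x| ≤ M) ∧
  (∃ M, ∀ x, ‖gradient f x‖ ≤ M) ∧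
  (∃ M, ∀ x, ‖hess f x‖ ≤ M) ∧
  UniformContinuous f ∧
  UniformContinuous (gradient f) ∧
  UniformContinuous (hess f) ∧
  (∀ x, gradient f x = 0 → Function.Bijective (hess f x))

/-- `γ` is the gradient ascent curve of `f` starting at `x`, defined on `[0, ∞)`. -/
def IsGradFlow {d : ℕ} (f : Euc d → ℝ) (x : Euc d) (γ : ℝ → Euc d) : Prop :=
  γ 0 = x ∧ ∀ t ∈ Ici (0:ℝ), HasDerivWithinAt γ (gradient f (γ t)) (Ici 0) t

/-! Let `C` be a level cluster at level `s` and `m` a maximiser of `f` on the compact set `C`.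
A segment from `m` along which `f` strictly increases would stay in `{f ≥ s}`, hence in `C`,
and contradict maximality. So the first- and second-order ascent tests fail at `m`:
`∇f(m) = 0` and the Hessian is negative semidefinite. Being nonsingular (Morse), it is then
negative definite, which makes `m` a strict local maximum.

A mode `x⋆` passes no ascent test either, so it is a strict local maximum too; since `f ≥ 0`,
`f x⋆ > 0`, and the level cluster of `x⋆` at level `f x⋆` meets a neighbourhood of `x⋆` only in
`x⋆`, so by connectedness it is `{x⋆}`. -/

open scoped Gradient

section Topology

variable {X : Type*} [TopologicalSpace X]

theorem IsCompact.connectedComponentIn {F : Set X} (hF : IsCompact F) (x : X) :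
    IsCompact (connectedComponentIn F x) := by
  by_cases hx : x ∈ F
  · have : CompactSpace F := isCompact_iff_compactSpace.mp hF
    rw [connectedComponentIn_eq_image hx]
    exact isClosed_connectedComponent.isCompact.image continuous_subtype_val
  · rw [connectedComponentIn_eq_empty hx]
    exact isCompact_empty

theorem isCompact_setOf_le_of_tendsto_cocompact {f : X → ℝ} (hf : Continuous f)
    (hlim : Tendsto f (cocompact X) (𝓝 0)) {s : ℝ} (hs : 0 < s) :
    IsCompact {y | s ≤ f y} := by
  obtain ⟨K, hK, hsub⟩ := mem_cocompact'.mp (hlim (Iio_mem_nhds hs))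
  refine hK.of_isClosed_subset (isClosed_le continuous_const hf) fun y hy => hsub ?_
  simpa using hy

theorem IsPreconnected.eq_singleton_of_inter_subset [T1Space X] {s U : Set X} {m : X}
    (hs : IsPreconnected s) (hm : m ∈ s) (hU : U ∈ 𝓝 m) (hsU : s ∩ U ⊆ {m}) : s = {m} := by
  obtain ⟨V, hVU, hV, hmV⟩ := mem_nhds_iff.mp hU
  have hcover : s ⊆ V ∪ {m}ᶜ := fun y _ => by
    by_cases hy : y = m
    · exact Or.inl (hy ▸ hmV)
    · exact Or.inr hy
  have hdisj : s ∩ (V ∩ {m}ᶜ) = ∅ :=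
    eq_empty_of_forall_notMem fun y ⟨hy, hyV, hym⟩ => hym (hsU ⟨hy, hVU hyV⟩)
  rcases isPreconnected_iff_subset_of_disjoint.mp hs V {m}ᶜ hV isOpen_compl_singleton
    hcover hdisj with h | h
  · exact Subset.antisymm (fun y hy => hsU ⟨hy, hVU (h hy)⟩) (singleton_subset_iff.mpr hm)
  · exact absurd rfl (h hm)

theorem connectedComponentIn_setOf_le_eq_singleton [T1Space X] {f : X → ℝ} {m : X}
    (h : ∀ᶠ y in 𝓝[≠] m, f y < f m) :
    connectedComponentIn {y | f m ≤ f y} m = {m} := by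
  refine isPreconnected_connectedComponentIn.eq_singleton_of_inter_subset
    (mem_connectedComponentIn (le_refl (f m))) (eventually_nhdsWithin_iff.mp h) ?_
  rintro y ⟨hyC, hy⟩
  by_contra hym
  have hle : f m ≤ f y := connectedComponentIn_subset {y | f m ≤ f y} m hyC
  exact (hy hym).not_ge hle

end Topology

theorem eventually_nhdsGT_pos_of_hasDerivAt {g : ℝ → ℝ} {a x₀ : ℝ} (hg : HasDerivAt g a x₀)
    (ha : 0 < a) (h₀ : g x₀ = 0) : ∀ᶠ t in 𝓝[>] x₀, 0 < g t := by
  have hslope := (hasDerivAt_iff_tendsto_slope.mp hg).mono_left (nhdsGT_le_nhdsNE x₀)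
  filter_upwards [hslope.eventually (eventually_gt_nhds ha), self_mem_nhdsWithin] with t ht hxt
  exact pos_of_slope_pos hxt ht h₀

theorem exists_pos_inner_map_self_le_neg_mul_norm_sq {E : Type*} [NormedAddCommGroup E]
    [InnerProductSpace ℝ E] [FiniteDimensional ℝ E] {T : E →ₗ[ℝ] E} (hT : T.IsSymmetric)
    (hinj : Function.Injective T) (hnonpos : ∀ v, ⟪T v, v⟫ ≤ 0) :
    ∃ μ > 0, ∀ v, ⟪T v, v⟫ ≤ -μ * ‖v‖ ^ 2 := by
  rcases subsingleton_or_nontrivial E with hE | hE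
  · exact ⟨1, one_pos, fun v => by simp [Subsingleton.elim v 0]⟩
  let q : { v : E // v ≠ 0 } → ℝ := fun v => ⟪T v, v⟫ / ‖(v : E)‖ ^ 2
  have hq : ∀ v, q v ≤ 0 := fun v => div_nonpos_of_nonpos_of_nonneg (hnonpos v) (by positivity)
  -- the top of the Rayleigh quotient is an eigenvalue, hence nonzero by injectivity
  have hρ : Module.End.HasEigenvalue T (⨆ v, q v) := hT.hasEigenvalue_iSup_of_finiteDimensional
  have hρ_ne : (⨆ v, q v) ≠ 0 := by
    intro h0
    obtain ⟨v, hv⟩ := hρ.exists_hasEigenvector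
    rw [h0] at hv
    exact hv.2 (hinj (by simpa using hv.apply_eq_smul))
  have : Nonempty { v : E // v ≠ 0 } := nonempty_subtype.mpr (exists_ne 0)
  refine ⟨-⨆ v, q v, neg_pos.mpr ((ciSup_le hq).lt_of_ne hρ_ne), fun v => ?_⟩
  rcases eq_or_ne v 0 with rfl | hv
  · simp
  have hle : q ⟨v, hv⟩ ≤ ⨆ v, q v := le_ciSup ⟨0, forall_mem_range.mpr hq⟩ _
  rw [neg_neg]
  exact (div_le_iff₀ (by positivity)).mp hle

theorem eventually_inner_sub_neg_of_hasFDerivAt {E : Type*} [NormedAddCommGroup E]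
    [InnerProductSpace ℝ E] {F : E → E} {H : E →L[ℝ] E} {m : E} {μ : ℝ}
    (hF : HasFDerivAt F H m) (h₀ : F m = 0) (hμ : 0 < μ) (hH : ∀ v, ⟪H v, v⟫ ≤ -μ * ‖v‖ ^ 2) :
    ∀ᶠ y in 𝓝[≠] m, ⟪F y, y - m⟫ < 0 := by
  filter_upwards [nhdsWithin_le_nhds (hF.isLittleO.def (half_pos hμ)), self_mem_nhdsWithin]
    with y hy hym
  have hpos : 0 < ‖y - m‖ := norm_pos_iff.mpr (sub_ne_zero.mpr hym)
  calc ⟪F y, y - m⟫ = ⟪F y - F m - H (y - m), y - m⟫ + ⟪H (y - m), y - m⟫ := by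
        simp [h₀, inner_sub_left]
    _ ≤ μ / 2 * ‖y - m‖ * ‖y - m‖ + -μ * ‖y - m‖ ^ 2 :=
        add_le_add ((real_inner_le_norm _ _).trans (by gcongr)) (hH _)
    _ < 0 := by nlinarith [mul_pos hμ (pow_pos hpos 2)]

section Ascent

variable {E : Type*} [NormedAddCommGroup E] [NormedSpace ℝ E]

def HasAscentSegment (f : E → ℝ) (m : E) : Prop :=
  ∃ v : E, ∃ δ > (0 : ℝ), StrictMonoOn (fun t : ℝ => f (m + t • v)) (Icc 0 δ)

theorem IsLocalMax.not_hasAscentSegment {f : E → ℝ} {m : E} (h : IsLocalMax f m) :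
    ¬HasAscentSegment f m := by
  rintro ⟨v, δ, hδ, hmono⟩
  have hline : Tendsto (fun t : ℝ => m + t • v) (𝓝[>] 0) (𝓝 m) := by
    have : Continuous fun t : ℝ => m + t • v := by fun_prop
    simpa using (this.tendsto 0).mono_left nhdsWithin_le_nhds
  obtain ⟨t, hle, ht⟩ :=
    ((hline.eventually h).and (Ioc_mem_nhdsGT hδ)).exists
  have := hmono (left_mem_Icc.mpr hδ.le) (Ioc_subset_Icc_self ht) ht.1
  simp only [zero_smul, add_zero] at this
  exact this.not_ge hle

theorem IsMaxOn.not_hasAscentSegment_of_connectedComponentIn {f : E → ℝ} {s : ℝ} {x m : E}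
    (hm : m ∈ connectedComponentIn {y | s ≤ f y} x)
    (hmax : IsMaxOn f (connectedComponentIn {y | s ≤ f y} x) m) : ¬HasAscentSegment f m := by
  rintro ⟨v, δ, hδ, hmono⟩
  have hδmem : δ ∈ Icc 0 δ := right_mem_Icc.mpr hδ.le
  have hseg : (fun t : ℝ => m + t • v) '' Icc 0 δ ⊆ connectedComponentIn {y | s ≤ f y} x := by
    rw [connectedComponentIn_eq hm]
    refine (isPreconnected_Icc.image _ (by fun_prop)).subset_connectedComponentIn
      ⟨0, left_mem_Icc.mpr hδ.le, by simp⟩ ?_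
    rintro _ ⟨t, ht, rfl⟩
    have := hmono.monotoneOn (left_mem_Icc.mpr hδ.le) ht ht.1
    simp only [zero_smul, add_zero] at this
    exact (connectedComponentIn_subset _ _ hm).trans this
  have hend := hmax (hseg ⟨δ, hδmem, rfl⟩)
  have := hmono (left_mem_Icc.mpr hδ.le) hδmem hδ
  simp only [zero_smul, add_zero] at this
  exact this.not_ge hend

end Ascent

section Gradient

variable {E : Type*} [NormedAddCommGroup E] [InnerProductSpace ℝ E] [CompleteSpace E]
  {f : E → ℝ} {m x v : E}

theorem hasDerivAt_comp_line {t : ℝ} (hf : DifferentiableAt ℝ f (x + t • v)) :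
    HasDerivAt (fun t : ℝ => f (x + t • v)) ⟪∇ f (x + t • v), v⟫ t := by
  have hline : HasDerivAt (fun t : ℝ => x + t • v) v t := by
    simpa using ((hasDerivAt_id t).smul_const v).const_add x
  rw [inner_gradient_left]
  exact hf.hasFDerivAt.comp_hasDerivAt t hline

theorem strictMonoOn_comp_line (hf : Differentiable ℝ f) {a b : ℝ}
    (h : ∀ t ∈ Ioo a b, 0 < ⟪∇ f (x + t • v), v⟫) :
    StrictMonoOn (fun t : ℝ => f (x + t • v)) (Icc a b) := by
  refine strictMonoOn_of_deriv_pos (convex_Icc a b)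
    (fun t _ => (hasDerivAt_comp_line (hf _)).continuousAt.continuousWithinAt) fun t ht => ?_
  rw [interior_Icc] at ht
  rw [(hasDerivAt_comp_line (hf _)).deriv]
  exact h t ht

theorem hasAscentSegment_of_eventually_inner_gradient_pos (hf : Differentiable ℝ f)
    (h : ∀ᶠ t : ℝ in 𝓝[>] 0, 0 < ⟪∇ f (m + t • v), v⟫) : HasAscentSegment f m := by
  obtain ⟨δ, hδ, hsub⟩ := mem_nhdsGT_iff_exists_Ioo_subset.mp h
  exact ⟨v, δ, hδ, strictMonoOn_comp_line hf hsub⟩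

theorem gradient_eq_zero_of_not_hasAscentSegment (hf : Differentiable ℝ f)
    (hg : ContinuousAt (∇ f) m) (h : ¬HasAscentSegment f m) : ∇ f m = 0 := by
  by_contra hne
  have hcont : ContinuousAt (fun t : ℝ => ⟪∇ f (m + t • ∇ f m), ∇ f m⟫) 0 :=
    (hg.comp_of_eq (by fun_prop) (by simp)).inner continuousAt_const
  have hpos : 0 < ⟪∇ f (m + (0 : ℝ) • ∇ f m), ∇ f m⟫ := by
    simpa only [zero_smul, add_zero, real_inner_self_eq_norm_sq] using
      pow_pos (norm_pos_iff.mpr hne) 2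
  exact h (hasAscentSegment_of_eventually_inner_gradient_pos hf
    ((hcont.eventually (lt_mem_nhds hpos)).filter_mono nhdsWithin_le_nhds))

theorem inner_fderiv_gradient_nonpos_of_not_hasAscentSegment (hf : Differentiable ℝ f)
    (hg : DifferentiableAt ℝ (∇ f) m) (h₀ : ∇ f m = 0) (h : ¬HasAscentSegment f m) (v : E) :
    ⟪fderiv ℝ (∇ f) m v, v⟫ ≤ 0 := by
  by_contra! hpos
  refine h (hasAscentSegment_of_eventually_inner_gradient_pos hf (v := v) ?_)
  have hline : HasDerivAt (fun t : ℝ => m + t • v) v 0 := by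
    simpa using ((hasDerivAt_id (0 : ℝ)).smul_const v).const_add m
  have hgrad : HasDerivAt (fun t : ℝ => ∇ f (m + t • v)) (fderiv ℝ (∇ f) m v) 0 :=
    hg.hasFDerivAt.comp_hasDerivAt_of_eq 0 hline (by simp)
  refine eventually_nhdsGT_pos_of_hasDerivAt ?_ hpos (by simp [h₀])
  simpa using hgrad.inner ℝ (hasDerivAt_const (0 : ℝ) v)

theorem isSymmetric_fderiv_gradient (hf : Differentiable ℝ f) (hg : DifferentiableAt ℝ (∇ f) m) :
    (fderiv ℝ (∇ f) m : E →ₗ[ℝ] E).IsSymmetric := by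
  have hf' : ∀ y, HasFDerivAt f (innerSL ℝ (∇ f y)) y := fun y => by
    convert (hf y).hasFDerivAt using 1
    ext w
    simp [inner_gradient_left]
  intro v w
  rw [ContinuousLinearMap.coe_coe, real_inner_comm _ v]
  exact second_derivative_symmetric hf'
    ((innerSL ℝ (E := E)).hasFDerivAt.comp m hg.hasFDerivAt) v w

theorem eventually_lt_of_eventually_inner_gradient_neg (hf : Differentiable ℝ f)
    (h : ∀ᶠ y in 𝓝[≠] m, ⟪∇ f y, y - m⟫ < 0) : ∀ᶠ y in 𝓝[≠] m, f y < f m := by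
  obtain ⟨δ, hδ, hball⟩ := Metric.eventually_nhds_iff.mp (eventually_nhdsWithin_iff.mp h)
  filter_upwards [eventually_nhdsWithin_of_eventually_nhds (ball_mem_nhds m hδ),
    self_mem_nhdsWithin] with y hy hym
  have hmono : StrictMonoOn (fun t : ℝ => f (y + t • (m - y))) (Icc 0 1) := by
    refine strictMonoOn_comp_line hf fun t ht => ?_
    have hz : y + t • (m - y) - m = (1 - t) • (y - m) := by module
    have hzm : ‖y + t • (m - y) - m‖ < δ := by
      rw [hz, norm_smul, Real.norm_of_nonneg (by linarith [ht.2])]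
      nlinarith [ht.1, norm_nonneg (y - m), mem_ball.mp hy, dist_eq_norm y m]
    have hzne : y + t • (m - y) ≠ m := by
      rw [← sub_ne_zero, hz]
      exact smul_ne_zero (sub_pos.mpr ht.2).ne' (sub_ne_zero.mpr hym)
    have hneg := hball (by rwa [dist_eq_norm]) hzne
    rw [hz, inner_smul_right, ← neg_sub m y, inner_neg_right, mul_neg, neg_lt_zero] at hneg
    exact pos_of_mul_pos_right hneg (sub_pos.mpr ht.2).le
  simpa using hmono (left_mem_Icc.mpr zero_le_one) (right_mem_Icc.mpr zero_le_one) zero_lt_one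

end Gradient

section Morse

variable {E : Type*} [NormedAddCommGroup E] [InnerProductSpace ℝ E] [FiniteDimensional ℝ E]
  {f : E → ℝ} {m : E}

theorem eventually_lt_of_not_hasAscentSegment (hf : Differentiable ℝ f)
    (hg : DifferentiableAt ℝ (∇ f) m)
    (hmorse : ∇ f m = 0 → Function.Injective (fderiv ℝ (∇ f) m))
    (h : ¬HasAscentSegment f m) : ∀ᶠ y in 𝓝[≠] m, f y < f m := by
  have h₀ := gradient_eq_zero_of_not_hasAscentSegment hf hg.continuousAt h
  obtain ⟨μ, hμ, hneg⟩ := exists_pos_inner_map_self_le_neg_mul_norm_sq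
    (isSymmetric_fderiv_gradient hf hg) (hmorse h₀)
    (inner_fderiv_gradient_nonpos_of_not_hasAscentSegment hf hg h₀ h)
  exact eventually_lt_of_eventually_inner_gradient_neg hf
    (eventually_inner_sub_neg_of_hasFDerivAt hg.hasFDerivAt h₀ hμ hneg)

theorem exists_isLocalMax_mem_connectedComponentIn (hf : Differentiable ℝ f)
    (hg : Differentiable ℝ (∇ f))
    (hmorse : ∀ y, ∇ f y = 0 → Function.Injective (fderiv ℝ (∇ f) y)) {s : ℝ} {x : E}
    (hs : IsCompact {y | s ≤ f y}) (hx : s ≤ f x) :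
    ∃ m ∈ connectedComponentIn {y | s ≤ f y} x, IsLocalMax f m := by
  obtain ⟨m, hmC, hmax⟩ := (hs.connectedComponentIn x).exists_isMaxOn
    ⟨x, mem_connectedComponentIn hx⟩ hf.continuous.continuousOn
  have hlt := eventually_lt_of_not_hasAscentSegment hf (hg m) (hmorse m)
    (hmax.not_hasAscentSegment_of_connectedComponentIn hmC)
  refine ⟨m, hmC, ?_⟩
  filter_upwards [eventually_nhdsWithin_iff.mp hlt] with y hy
  by_cases hym : y = m
  · rw [hym]
  · exact (hy hym).le

end Morse

theorem level_cluster_contains_mode_and_mode_is_intersection_general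
    {d : ℕ} (f : Euc d → ℝ) (hf : IsNiceDensity f) :
    (∀ s ∈ Ioo (0:ℝ) (⨆ x, f x), ∀ x : Euc d, s ≤ f x →
      ∃ m ∈ connectedComponentIn {y : Euc d | s ≤ f y} x, IsLocalMax f m) ∧
    (∀ xstar : Euc d, IsLocalMax f xstar →
      ⋂ s ∈ Ioc (0:ℝ) (f xstar), connectedComponentIn {y : Euc d | s ≤ f y} xstar
        = {xstar}) := by
  obtain ⟨hnonneg, -, hvanish, hdf, hdg, -, -, -, -, -, -, hmorse⟩ := hf
  have hinj : ∀ y, gradient f y = 0 → Function.Injective (fderiv ℝ (gradient f) y) :=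
    fun y hy => (hmorse y hy).injective
  refine ⟨fun s hs x hx => exists_isLocalMax_mem_connectedComponentIn hdf hdg hinj
    (isCompact_setOf_le_of_tendsto_cocompact hdf.continuous hvanish hs.1) hx,
    fun xstar hmax => ?_⟩
  have hmem : xstar ∈ ⋂ s ∈ Ioc (0:ℝ) (f xstar), connectedComponentIn {y | s ≤ f y} xstar :=
    mem_iInter₂.mpr fun s hs => mem_connectedComponentIn hs.2
  refine Subset.antisymm ?_ (singleton_subset_iff.mpr hmem)
  rcases subsingleton_or_nontrivial (Euc d) with hE | hE
  · exact fun y _ => Subsingleton.elim y xstar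
  have hlt := eventually_lt_of_not_hasAscentSegment hdf (hdg xstar) (hinj xstar)
    hmax.not_hasAscentSegment
  obtain ⟨y, hy⟩ := hlt.exists
  have hpos : f xstar ∈ Ioc 0 (f xstar) := ⟨(hnonneg y).trans_lt hy, le_rfl⟩
  exact (biInter_subset_of_mem hpos).trans (connectedComponentIn_setOf_le_eq_singleton hlt).le

/-- Every nonempty connected component of an upper level set `{f ≥ s}`
(for `0 < s < sup f`) contains a mode, and a mode is the intersection of all the level
clusters containing it. -/
theorem level_cluster_contains_mode_and_mode_is_intersection
    {d : ℕ} (hd : 0 < d) (f : Euc d → ℝ) (hf : IsNiceDensity f) :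
    (∀ s ∈ Ioo (0:ℝ) (⨆ x, f x), ∀ x : Euc d, s ≤ f x →
      ∃ m ∈ connectedComponentIn {y : Euc d | s ≤ f y} x, IsLocalMax f m) ∧
    (∀ xstar : Euc d, IsLocalMax f xstar →
      ⋂ s ∈ Ioc (0:ℝ) (f xstar), connectedComponentIn {y : Euc d | s ≤ f y} xstar
        = {xstar}) :=
  level_cluster_contains_mode_and_mode_is_intersection_general f hf
end

section
/- Let x⋆ be a mode of f and set s⋆ = f(x⋆). Then there exists δ > 0 such that the constant C = sup_{x ∈ closedBall(x⋆,δ)} max{√(λ_max(x)), 2/√(λ_min(x))} is finite, where λ_max(x) and λ_min(x) denote the largest and smallest eigenvalues of −∇²f(x), and for every s ∈ (s⋆ − δ²/C², s⋆), letting C_s denote the connected component of {f ≥ s} containing x⋆, one has closedBall(x⋆, √(s⋆ − s)/C) ⊆ C_s ⊆ ball(x⋆, C·√(s⋆ − s)). -/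
open Metric Set Filter MeasureTheory Topology
open scoped Topology RealInnerProductSpace

/-- The largest eigenvalue of `-∇²f(x)`, expressed via the Rayleigh quotient. -/
noncomputable def lamMax {d : ℕ} (f : Euc d → ℝ) (x : Euc d) : ℝ :=
  sSup {r : ℝ | ∃ v : Euc d, ‖v‖ = 1 ∧ ⟪-((hess f x) v), v⟫ = r}

/-- The smallest eigenvalue of `-∇²f(x)`, expressed via the Rayleigh quotient. -/
noncomputable def lamMin {d : ℕ} (f : Euc d → ℝ) (x : Euc d) : ℝ :=
  sInf {r : ℝ | ∃ v : Euc d, ‖v‖ = 1 ∧ ⟪-((hess f x) v), v⟫ = r}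

/-!
At a nondegenerate local maximum the Hessian is negative definite, so by continuity the
eigenvalues of `-∇²f` stay between `4/C²` and `C²` on a small ball around `x⋆`. Integrating
twice along segments from `x⋆` squeezes `f` there between the paraboloids
`s⋆ - C²/2 ‖x - x⋆‖²` and `s⋆ - 2/C² ‖x - x⋆‖²`. The ball of radius `√(s⋆ - s)/C` lies under
the first and above level `s`, so, being convex, it lies in the level cluster; on the sphere of
radius `C √(s⋆ - s)` the second is already below `s`, so the connected level cluster cannot
reach that sphere.
-/

section NumericalRange

variable {E : Type*} [NormedAddCommGroup E] [InnerProductSpace ℝ E]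

def numericalRange (A : E →L[ℝ] E) : Set ℝ := (fun v => ⟪A v, v⟫) '' sphere 0 1

theorem abs_inner_apply_self_le (A : E →L[ℝ] E) (v : E) : |⟪A v, v⟫| ≤ ‖A‖ * ‖v‖ ^ 2 :=
  calc |⟪A v, v⟫| ≤ ‖A v‖ * ‖v‖ := abs_real_inner_le_norm _ _
    _ ≤ ‖A‖ * ‖v‖ * ‖v‖ := by gcongr; exact A.le_opNorm v
    _ = ‖A‖ * ‖v‖ ^ 2 := by ring

theorem numericalRange_subset_Icc (A : E →L[ℝ] E) : numericalRange A ⊆ Icc (-‖A‖) ‖A‖ := by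
  rintro _ ⟨v, hv, rfl⟩
  have := abs_inner_apply_self_le A v
  rw [mem_sphere_zero_iff_norm.1 hv, one_pow, mul_one] at this
  exact abs_le.1 this

theorem bddAbove_numericalRange (A : E →L[ℝ] E) : BddAbove (numericalRange A) :=
  bddAbove_Icc.mono (numericalRange_subset_Icc A)

theorem bddBelow_numericalRange (A : E →L[ℝ] E) : BddBelow (numericalRange A) :=
  bddBelow_Icc.mono (numericalRange_subset_Icc A)

theorem numericalRange_nonempty [Nontrivial E] (A : E →L[ℝ] E) : (numericalRange A).Nonempty :=
  (NormedSpace.sphere_nonempty.2 zero_le_one).image _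

theorem inner_apply_self_eq_sq_mul (A : E →L[ℝ] E) {v : E} (hv : v ≠ 0) :
    ⟪A v, v⟫ = ‖v‖ ^ 2 * ⟪A (‖v‖⁻¹ • v), ‖v‖⁻¹ • v⟫ := by
  have : ‖v‖ ≠ 0 := norm_ne_zero_iff.2 hv
  rw [map_smul, real_inner_smul_left, real_inner_smul_right]
  field_simp

theorem sInf_numericalRange_mul_le (A : E →L[ℝ] E) (v : E) :
    sInf (numericalRange A) * ‖v‖ ^ 2 ≤ ⟪A v, v⟫ := by
  rcases eq_or_ne v 0 with rfl | hv
  · simp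
  rw [inner_apply_self_eq_sq_mul A hv, mul_comm]
  gcongr
  exact csInf_le (bddBelow_numericalRange A) ⟨_, by simp [norm_smul, hv], rfl⟩

theorem inner_le_sSup_numericalRange_mul (A : E →L[ℝ] E) (v : E) :
    ⟪A v, v⟫ ≤ sSup (numericalRange A) * ‖v‖ ^ 2 := by
  rcases eq_or_ne v 0 with rfl | hv
  · simp
  rw [inner_apply_self_eq_sq_mul A hv, mul_comm]
  gcongr
  exact le_csSup (bddAbove_numericalRange A) ⟨_, by simp [norm_smul, hv], rfl⟩

theorem sSup_numericalRange_le_norm [Nontrivial E] (A : E →L[ℝ] E) :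
    sSup (numericalRange A) ≤ ‖A‖ :=
  csSup_le (numericalRange_nonempty A) fun _ hr => (numericalRange_subset_Icc A hr).2

theorem sInf_numericalRange_le_sSup [Nontrivial E] (A : E →L[ℝ] E) :
    sInf (numericalRange A) ≤ sSup (numericalRange A) :=
  csInf_le_csSup (numericalRange_nonempty A) (bddBelow_numericalRange A)
    (bddAbove_numericalRange A)

theorem lipschitzWith_sInf_numericalRange [Nontrivial E] :
    LipschitzWith 1 fun A : E →L[ℝ] E => sInf (numericalRange A) := by
  refine LipschitzWith.of_le_add fun A B => ?_
  rw [← sub_le_iff_le_add]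
  refine le_csInf (numericalRange_nonempty B) ?_
  rintro _ ⟨v, hv, rfl⟩
  have hv1 : ‖v‖ = 1 := mem_sphere_zero_iff_norm.1 hv
  have hA := sInf_numericalRange_mul_le A v
  have hAB := (abs_le.1 (abs_inner_apply_self_le (A - B) v)).2
  simp only [hv1, one_pow, mul_one, sub_apply, inner_sub_left] at hA hAB
  rw [dist_eq_norm]
  linarith

theorem sInf_numericalRange_pos [FiniteDimensional ℝ E] [Nontrivial E] {A : E →L[ℝ] E}
    (hA : ∀ v ≠ 0, 0 < ⟪A v, v⟫) : 0 < sInf (numericalRange A) := by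
  have hcont : Continuous fun v => ⟪A v, v⟫ := A.continuous.inner continuous_id
  obtain ⟨v, hv, hvmin⟩ :=
    ((isCompact_sphere (0 : E) 1).image hcont).sInf_mem (numericalRange_nonempty A)
  change 0 < sInf (numericalRange A)
  rw [numericalRange, ← hvmin]
  exact hA v (ne_zero_of_mem_unit_sphere ⟨v, hv⟩)

theorem LinearMap.IsPositive.apply_eq_zero_of_inner_self_eq_zero {T : E →ₗ[ℝ] E}
    (hT : T.IsPositive) {v : E} (hv : ⟪T v, v⟫ = 0) : T v = 0 := by
  -- `t ↦ ⟪T (v + t • T v), v + t • T v⟫` is a nonnegative quadratic vanishing at `0`, so its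
  -- linear coefficient `2 ‖T v‖²` vanishes.
  have hquad (t : ℝ) : 0 ≤ ⟪T (T v), T v⟫ * (t * t) + 2 * ⟪T v, T v⟫ * t + 0 := by
    have := hT.inner_nonneg_left (v + t • T v)
    simp only [map_add, map_smul, inner_add_left, inner_add_right, real_inner_smul_left,
      real_inner_smul_right, hv, hT.isSymmetric (T v) v] at this
    linarith
  have := discrim_le_zero hquad
  rw [discrim, mul_zero, sub_zero] at this
  have h2 : ⟪T v, T v⟫ = 0 := by simpa using le_antisymm this (sq_nonneg _)
  exact inner_self_eq_zero.1 h2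

end NumericalRange

section SecondOrderReal

variable {φ φ' φ'' : ℝ → ℝ}

theorem sub_le_half_of_deriv2_le {b : ℝ} (hφ : ∀ t, HasDerivAt φ (φ' t) t)
    (hφ' : ∀ t, HasDerivAt φ' (φ'' t) t) (h₀ : φ' 0 = 0) (hb : ∀ t ∈ Icc (0 : ℝ) 1, φ'' t ≤ b) :
    φ 1 - φ 0 ≤ b / 2 := by
  have hcont {g g' : ℝ → ℝ} (hg : ∀ t, HasDerivAt g (g' t) t) : ContinuousOn g (Icc 0 1) :=
    fun t _ => (hg t).continuousAt.continuousWithinAt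
  have hslope : ∀ t ∈ Icc (0 : ℝ) 1, φ' t ≤ b * t := by
    have hlin (t : ℝ) : HasDerivAt (fun t => b * t) b t := by
      simpa using (hasDerivAt_id t).const_mul b
    refine image_le_of_deriv_right_le_deriv_boundary (hcont hφ')
      (fun t _ => (hφ' t).hasDerivWithinAt) (by simp [h₀]) (hcont hlin)
      (fun t _ => (hlin t).hasDerivWithinAt) (fun t ht => hb t (Ico_subset_Icc_self ht))
  have hquad (t : ℝ) : HasDerivAt (fun t => φ 0 + b / 2 * t ^ 2) (b * t) t := by
    refine (((hasDerivAt_pow 2 t).const_mul (b / 2)).const_add (φ 0)).congr_deriv ?_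
    push_cast
    ring
  have := image_le_of_deriv_right_le_deriv_boundary (hcont hφ)
    (fun t _ => (hφ t).hasDerivWithinAt) (le_of_eq (by simp)) (hcont hquad)
    (fun t _ => (hquad t).hasDerivWithinAt) (fun t ht => hslope t (Ico_subset_Icc_self ht))
    (right_mem_Icc.2 zero_le_one)
  simp only [one_pow, mul_one] at this
  linarith

theorem half_le_sub_of_le_deriv2 {a : ℝ} (hφ : ∀ t, HasDerivAt φ (φ' t) t)
    (hφ' : ∀ t, HasDerivAt φ' (φ'' t) t) (h₀ : φ' 0 = 0) (ha : ∀ t ∈ Icc (0 : ℝ) 1, a ≤ φ'' t) :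
    a / 2 ≤ φ 1 - φ 0 := by
  have := sub_le_half_of_deriv2_le (φ := -φ) (φ' := -φ') (φ'' := -φ'') (b := -a)
    (fun t => (hφ t).neg) (fun t => (hφ' t).neg) (by simp [h₀])
    (fun t ht => neg_le_neg (ha t ht))
  simp only [Pi.neg_apply] at this
  linarith

theorem IsLocalMax.deriv_deriv_nonpos {f : ℝ → ℝ} {x₀ : ℝ} (hmax : IsLocalMax f x₀)
    (hc : ContinuousAt f x₀) : deriv (deriv f) x₀ ≤ 0 := by
  -- A positive second derivative would make `x₀` a local minimum too, so `f` would be locally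
  -- constant there.
  by_contra! hpos
  have hmin := isLocalMin_of_deriv_deriv_pos hpos hmax.deriv_eq_zero hc
  have hconst : f =ᶠ[𝓝 x₀] fun _ => f x₀ := (hmin.and hmax).mono fun _ h => le_antisymm h.2 h.1
  have : deriv (deriv f) x₀ = 0 := by
    rw [(hconst.deriv).deriv_eq]
    simp
  exact hpos.ne' this

end SecondOrderReal

theorem hasDerivAt_add_smul {E : Type*} [NormedAddCommGroup E] [NormedSpace ℝ E] (x v : E)
    (t : ℝ) : HasDerivAt (fun t : ℝ => x + t • v) v t := by
  simpa using ((hasDerivAt_id t).smul_const v).const_add x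

section Hessian

variable {E : Type*} [NormedAddCommGroup E] [InnerProductSpace ℝ E] [CompleteSpace E]
  {f : E → ℝ} {x v : E}

theorem hasDerivAt_comp_add_smul {t : ℝ} (hf : DifferentiableAt ℝ f (x + t • v)) :
    HasDerivAt (fun t : ℝ => f (x + t • v)) ⟪gradient f (x + t • v), v⟫ t := by
  exact hf.hasGradientAt.hasFDerivAt.comp_hasDerivAt t (hasDerivAt_add_smul x v t)

theorem hasDerivAt_inner_gradient_comp_add_smul {t : ℝ}
    (hg : DifferentiableAt ℝ (gradient f) (x + t • v)) :
    HasDerivAt (fun t : ℝ => ⟪gradient f (x + t • v), v⟫)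
      ⟪fderiv ℝ (gradient f) (x + t • v) v, v⟫ t := by
  simpa using
    (hg.hasFDerivAt.comp_hasDerivAt t (hasDerivAt_add_smul x v t)).inner ℝ (hasDerivAt_const t v)

theorem Convex.quadratic_bounds_of_hessian_bounds {s : Set E} (hs : Convex ℝ s) {x₀ : E}
    (hx₀ : x₀ ∈ s) (hx : x ∈ s) (hf : Differentiable ℝ f) (hg : Differentiable ℝ (gradient f))
    (h₀ : gradient f x₀ = 0) {a b : ℝ}
    (hH : ∀ y ∈ s, ∀ v, a * ‖v‖ ^ 2 ≤ ⟪fderiv ℝ (gradient f) y v, v⟫ ∧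
      ⟪fderiv ℝ (gradient f) y v, v⟫ ≤ b * ‖v‖ ^ 2) :
    f x₀ + a / 2 * ‖x - x₀‖ ^ 2 ≤ f x ∧ f x ≤ f x₀ + b / 2 * ‖x - x₀‖ ^ 2 := by
  set v := x - x₀
  have hφ (t : ℝ) := hasDerivAt_comp_add_smul (f := f) (x := x₀) (v := v) (hf (x₀ + t • v))
  have hφ' (t : ℝ) := hasDerivAt_inner_gradient_comp_add_smul (x := x₀) (v := v) (hg (x₀ + t • v))
  have h₀' : ⟪gradient f (x₀ + (0 : ℝ) • v), v⟫ = 0 := by simp [h₀]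
  have hseg (t) (ht : t ∈ Icc (0 : ℝ) 1) := hH _ (hs.add_smul_sub_mem hx₀ hx ht) v
  have hup := sub_le_half_of_deriv2_le hφ hφ' h₀' fun t ht => (hseg t ht).2
  have hlow := half_le_sub_of_le_deriv2 hφ hφ' h₀' fun t ht => (hseg t ht).1
  simp only [v, zero_smul, one_smul, add_zero, add_sub_cancel] at hup hlow
  constructor <;> linarith

theorem IsLocalMax.gradient_eq_zero (h : IsLocalMax f x) : gradient f x = 0 := by
  rw [gradient, h.fderiv_eq_zero, map_zero]

theorem inner_fderiv_gradient_comm (hf : Differentiable ℝ f)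
    (hg : DifferentiableAt ℝ (gradient f) x) (v w : E) :
    ⟪fderiv ℝ (gradient f) x v, w⟫ = ⟪fderiv ℝ (gradient f) x w, v⟫ := by
  let L : E →L[ℝ] StrongDual ℝ E := (InnerProductSpace.toDualMap ℝ E).toContinuousLinearMap
  have hL : HasFDerivAt (fun y => L (gradient f y)) (L.comp (fderiv ℝ (gradient f) x)) x :=
    L.hasFDerivAt.comp x hg.hasFDerivAt
  have := second_derivative_symmetric (fun y => (hf y).hasGradientAt.hasFDerivAt) hL v w
  simp only [L, ContinuousLinearMap.comp_apply] at this
  exact this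

theorem IsLocalMax.inner_fderiv_gradient_self_nonpos (h : IsLocalMax f x)
    (hf : Differentiable ℝ f) (hg : DifferentiableAt ℝ (gradient f) x) (v : E) :
    ⟪fderiv ℝ (gradient f) x v, v⟫ ≤ 0 := by
  have hline : Continuous fun t : ℝ => x + t • v := by fun_prop
  have hmax : IsLocalMax (fun t : ℝ => f (x + t • v)) 0 :=
    IsLocalMax.comp_continuous (g := fun t : ℝ => x + t • v) (b := 0) (by simpa using h)
      hline.continuousAt
  have hderiv : deriv (fun t : ℝ => f (x + t • v)) = fun t => ⟪gradient f (x + t • v), v⟫ :=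
    funext fun t => (hasDerivAt_comp_add_smul (hf _)).deriv
  have := hmax.deriv_deriv_nonpos (hf.continuous.comp hline).continuousAt
  rwa [hderiv, (hasDerivAt_inner_gradient_comp_add_smul (by simpa using hg)).deriv,
    zero_smul, add_zero] at this

theorem IsLocalMax.inner_neg_fderiv_gradient_self_pos (h : IsLocalMax f x)
    (hf : Differentiable ℝ f) (hg : DifferentiableAt ℝ (gradient f) x)
    (hinj : Function.Injective (fderiv ℝ (gradient f) x)) (hv : v ≠ 0) :
    0 < ⟪-(fderiv ℝ (gradient f) x v), v⟫ := by
  let T : E →ₗ[ℝ] E := -(fderiv ℝ (gradient f) x : E →ₗ[ℝ] E)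
  have hT : T.IsPositive := by
    refine (T.isPositive_iff).2 ⟨fun v w => ?_, fun v => ?_⟩
    · simp only [T, LinearMap.neg_apply, ContinuousLinearMap.coe_coe, inner_neg_left,
        inner_neg_right]
      rw [real_inner_comm _ v, inner_fderiv_gradient_comm hf hg]
    · simpa [T] using h.inner_fderiv_gradient_self_nonpos hf hg v
  refine (hT.inner_nonneg_left v).lt_of_ne fun h0 => hv (hinj ?_)
  have := hT.apply_eq_zero_of_inner_self_eq_zero h0.symm
  simpa [T] using this

end Hessian

theorem IsPreconnected.subset_ball_of_disjoint_sphere {X : Type*} [PseudoMetricSpace X]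
    {K : Set X} {x : X} {r : ℝ} (hK : IsPreconnected K) (hx : x ∈ K) (hr : 0 ≤ r)
    (hdisj : Disjoint K (sphere x r)) : K ⊆ ball x r := by
  intro y hy
  by_contra hyr
  rw [mem_ball, not_lt] at hyr
  obtain ⟨z, hzK, hz⟩ := hK.intermediate_value hx hy
    (continuous_id.dist continuous_const).continuousOn ⟨by simpa using hr, hyr⟩
  exact disjoint_left.1 hdisj hzK hz

theorem connectedComponentIn_superlevel_between_balls {E : Type*} [NormedAddCommGroup E]
    [NormedSpace ℝ E] {f : E → ℝ} {x₀ : E} {δ C s : ℝ} (hδ : 0 ≤ δ) (hC : 1 ≤ C)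
    (hlow : ∀ x ∈ closedBall x₀ δ, f x₀ - C ^ 2 / 2 * ‖x - x₀‖ ^ 2 ≤ f x)
    (hup : ∀ x ∈ closedBall x₀ δ, f x ≤ f x₀ - 2 / C ^ 2 * ‖x - x₀‖ ^ 2)
    (hs : s ∈ Ioo (f x₀ - δ ^ 2 / C ^ 2) (f x₀)) :
    closedBall x₀ (√(f x₀ - s) / C) ⊆ connectedComponentIn {y | s ≤ f y} x₀ ∧
      connectedComponentIn {y | s ≤ f y} x₀ ⊆ ball x₀ (C * √(f x₀ - s)) := by
  obtain ⟨hs₁, hs₂⟩ := hs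
  have hC₀ : 0 < C := zero_lt_one.trans_le hC
  have hgap : 0 < f x₀ - s := sub_pos.2 hs₂
  have hsq : √(f x₀ - s) ^ 2 = f x₀ - s := Real.sq_sqrt hgap.le
  have hR : C * √(f x₀ - s) < δ := by
    refine lt_of_pow_lt_pow_left₀ 2 hδ ?_
    rw [mul_pow, hsq, ← lt_div_iff₀' (by positivity)]
    linarith
  constructor
  · have hr : √(f x₀ - s) / C ≤ δ :=
      calc √(f x₀ - s) / C ≤ √(f x₀ - s) := div_le_self (Real.sqrt_nonneg _) hC
        _ ≤ C * √(f x₀ - s) := le_mul_of_one_le_left (Real.sqrt_nonneg _) hC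
        _ ≤ δ := hR.le
    refine (convex_closedBall x₀ _).isPreconnected.subset_connectedComponentIn
      (mem_closedBall_self (by positivity)) fun x hx => ?_
    have hx' : ‖x - x₀‖ ≤ √(f x₀ - s) / C := mem_closedBall_iff_norm.1 hx
    have hquad : C ^ 2 * ‖x - x₀‖ ^ 2 ≤ f x₀ - s :=
      calc C ^ 2 * ‖x - x₀‖ ^ 2 ≤ C ^ 2 * (√(f x₀ - s) / C) ^ 2 := by gcongr
        _ = f x₀ - s := by rw [div_pow, hsq]; field_simp
    have := hlow x (closedBall_subset_closedBall hr hx)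
    show s ≤ f x
    linarith
  · refine isPreconnected_connectedComponentIn.subset_ball_of_disjoint_sphere
      (mem_connectedComponentIn hs₂.le) (by positivity) (disjoint_left.2 fun z hz hzR => ?_)
    have hzδ : z ∈ closedBall x₀ δ :=
      closedBall_subset_closedBall hR.le (sphere_subset_closedBall hzR)
    have hquad : 2 / C ^ 2 * ‖z - x₀‖ ^ 2 = 2 * (f x₀ - s) := by
      rw [mem_sphere_iff_norm.1 hzR, mul_pow, hsq]
      field_simp
    have hsz : s ≤ f z := connectedComponentIn_subset {y | s ≤ f y} x₀ hz
    linarith [hup z hzδ]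

theorem four_div_sq_le_of_two_div_sqrt_le {a C : ℝ} (ha : 0 < a) (h : 2 / √a ≤ C) :
    4 / C ^ 2 ≤ a := by
  have hsa : 0 < √a := Real.sqrt_pos.2 ha
  have hC : 0 < C := (div_pos two_pos hsa).trans_le h
  rw [div_le_iff₀ hsa] at h
  rw [div_le_iff₀ (by positivity)]
  nlinarith [Real.sq_sqrt ha.le]

theorem one_le_of_max_sqrt_le {a b C : ℝ} (ha : 0 < a) (hab : a ≤ b)
    (h : max (√b) (2 / √a) ≤ C) : 1 ≤ C := by
  have hsa : 0 < √a := Real.sqrt_pos.2 ha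
  have h₁ : √a ≤ C := (Real.sqrt_le_sqrt hab).trans (le_max_left _ _ |>.trans h)
  have h₂ : 2 ≤ C * √a := (div_le_iff₀ hsa).1 (le_max_right _ _ |>.trans h)
  nlinarith

theorem bddAbove_image_max_sqrt {X : Type*} {S : Set X} {a b : X → ℝ} {m M : ℝ} (hm : 0 < m)
    (ha : ∀ x ∈ S, m ≤ a x) (hb : ∀ x ∈ S, b x ≤ M) :
    BddAbove ((fun x => max (√(b x)) (2 / √(a x))) '' S) := by
  refine ⟨max (√M) (2 / √m), ?_⟩
  rintro _ ⟨x, hx, rfl⟩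
  exact max_le_max (Real.sqrt_le_sqrt (hb x hx))
    (div_le_div_of_nonneg_left zero_le_two (Real.sqrt_pos.2 hm) (Real.sqrt_le_sqrt (ha x hx)))

section Euclidean

variable {d : ℕ} {f : Euc d → ℝ} {x : Euc d}

theorem nontrivial_euc (hd : 0 < d) : Nontrivial (Euc d) :=
  have : Nonempty (Fin d) := ⟨⟨0, hd⟩⟩
  inferInstance

theorem lamMin_eq_sInf_numericalRange (f : Euc d → ℝ) (x : Euc d) :
    lamMin f x = sInf (numericalRange (-hess f x)) := by
  simp [lamMin, numericalRange, Set.image]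

theorem lamMax_eq_sSup_numericalRange (f : Euc d → ℝ) (x : Euc d) :
    lamMax f x = sSup (numericalRange (-hess f x)) := by
  simp [lamMax, numericalRange, Set.image]

theorem inner_hess_bounds (f : Euc d → ℝ) (x v : Euc d) :
    -(lamMax f x * ‖v‖ ^ 2) ≤ ⟪hess f x v, v⟫ ∧ ⟪hess f x v, v⟫ ≤ -(lamMin f x * ‖v‖ ^ 2) := by
  have hlow := sInf_numericalRange_mul_le (-hess f x) v
  have hup := inner_le_sSup_numericalRange_mul (-hess f x) v
  rw [← lamMin_eq_sInf_numericalRange, neg_apply, inner_neg_left] at hlow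
  rw [← lamMax_eq_sSup_numericalRange, neg_apply, inner_neg_left] at hup
  constructor <;> linarith

theorem lamMin_le_lamMax (hd : 0 < d) : lamMin f x ≤ lamMax f x := by
  have := nontrivial_euc hd
  rw [lamMin_eq_sInf_numericalRange, lamMax_eq_sSup_numericalRange]
  exact sInf_numericalRange_le_sSup _

theorem lamMax_le_norm_hess (hd : 0 < d) : lamMax f x ≤ ‖hess f x‖ := by
  have := nontrivial_euc hd
  rw [lamMax_eq_sSup_numericalRange, ← norm_neg (hess f x)]
  exact sSup_numericalRange_le_norm _

theorem continuousAt_lamMin (hd : 0 < d) (h : ContinuousAt (hess f) x) :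
    ContinuousAt (lamMin f) x := by
  have := nontrivial_euc hd
  have hfun : lamMin f = (fun A => sInf (numericalRange A)) ∘ fun y => -hess f y :=
    funext fun y => lamMin_eq_sInf_numericalRange f y
  rw [hfun]
  exact lipschitzWith_sInf_numericalRange.continuous.continuousAt.comp h.neg

theorem lamMin_pos_of_isLocalMax (hd : 0 < d) (hf : Differentiable ℝ f)
    (hg : DifferentiableAt ℝ (gradient f) x) (h : IsLocalMax f x)
    (hinj : Function.Injective (hess f x)) : 0 < lamMin f x := by
  have := nontrivial_euc hd
  rw [lamMin_eq_sInf_numericalRange]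
  exact sInf_numericalRange_pos fun v hv => h.inner_neg_fderiv_gradient_self_pos hf hg hinj hv

theorem inner_hess_bounds_of_max_sqrt_le {C : ℝ} (hpos : 0 < lamMin f x)
    (hC : max (√(lamMax f x)) (2 / √(lamMin f x)) ≤ C) (v : Euc d) :
    -C ^ 2 * ‖v‖ ^ 2 ≤ ⟪hess f x v, v⟫ ∧ ⟪hess f x v, v⟫ ≤ -(4 / C ^ 2) * ‖v‖ ^ 2 := by
  have hmax : lamMax f x ≤ C ^ 2 := (Real.sqrt_le_iff.1 ((le_max_left _ _).trans hC)).2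
  have hmin := four_div_sq_le_of_two_div_sqrt_le hpos ((le_max_right _ _).trans hC)
  obtain ⟨hlow, hup⟩ := inner_hess_bounds f x v
  constructor <;> nlinarith [sq_nonneg ‖v‖]

end Euclidean

/-- Near a mode `x⋆` with `s⋆ = f(x⋆)`, for a suitable `δ > 0` the constant
`C = sup_{x ∈ closedBall(x⋆,δ)} max (√λ_max(x)) (2/√λ_min(x))` is finite, and for every
`s ∈ (s⋆ − δ²/C², s⋆)` the level cluster of `x⋆` at level `s` is squeezed between the balls
of radii `√(s⋆−s)/C` and `C√(s⋆−s)` around `x⋆`. -/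
theorem level_cluster_between_balls_near_mode
    {d : ℕ} (hd : 0 < d) (f : Euc d → ℝ) (hf : IsNiceDensity f)
    (xstar : Euc d) (hmode : IsLocalMax f xstar) :
    ∃ δ > (0:ℝ), ∃ C : ℝ,
      C = sSup ((fun x => max (Real.sqrt (lamMax f x)) (2 / Real.sqrt (lamMin f x))) ''
        closedBall xstar δ) ∧
      BddAbove ((fun x => max (Real.sqrt (lamMax f x)) (2 / Real.sqrt (lamMin f x))) ''
        closedBall xstar δ) ∧
      ∀ s ∈ Ioo (f xstar - δ^2 / C^2) (f xstar),
        closedBall xstar (Real.sqrt (f xstar - s) / C)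
            ⊆ connectedComponentIn {y : Euc d | s ≤ f y} xstar ∧
        connectedComponentIn {y : Euc d | s ≤ f y} xstar
            ⊆ ball xstar (C * Real.sqrt (f xstar - s)) := by
  obtain ⟨-, -, -, hf, hf', -, -, ⟨M, hM⟩, -, -, hH, hmorse⟩ := hf
  have hmin₀ : 0 < lamMin f xstar := lamMin_pos_of_isLocalMax hd hf (hf' xstar) hmode
    (hmorse _ hmode.gradient_eq_zero).injective
  obtain ⟨δ, hδ, hball⟩ := Metric.nhds_basis_closedBall.eventually_iff.1 <|
    (continuousAt_lamMin hd hH.continuous.continuousAt).eventually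
      (lt_mem_nhds (half_lt_self hmin₀))
  have hpos (y) (hy : y ∈ closedBall xstar δ) : 0 < lamMin f y := (half_pos hmin₀).trans (hball hy)
  have hbdd := bddAbove_image_max_sqrt (S := closedBall xstar δ) (a := lamMin f) (b := lamMax f)
    (half_pos hmin₀) (fun y hy => (hball hy).le) (fun y _ => lamMax_le_norm_hess hd |>.trans (hM y))
  have hC (y) (hy : y ∈ closedBall xstar δ) := le_csSup hbdd (mem_image_of_mem _ hy)
  refine ⟨δ, hδ, _, rfl, hbdd, fun s hs => ?_⟩
  have hquad (x) (hx : x ∈ closedBall xstar δ) :=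
    (convex_closedBall xstar δ).quadratic_bounds_of_hessian_bounds (mem_closedBall_self hδ.le) hx
      hf hf' hmode.gradient_eq_zero fun y hy =>
        inner_hess_bounds_of_max_sqrt_le (hpos y hy) (hC y hy)
  have hxstar := mem_closedBall_self (x := xstar) hδ.le
  refine connectedComponentIn_superlevel_between_balls hδ.le
    (one_le_of_max_sqrt_le hmin₀ (lamMin_le_lamMax hd) (hC _ hxstar))
    (fun x hx => (hquad x hx).1.trans_eq' (by ring))
    (fun x hx => (hquad x hx).2.trans_eq (by ring)) hs
end

section
/- Let x⋆ be a mode of f. Then there exists δ > 0 such that for all sufficiently small ε > 0, every Max Shift sequence with parameter ε started at any point of ball(x⋆, δ) is eventually constant equal to x⋆ (i.e., converges to x⋆ in a finite number of steps). -/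
open Metric Set Filter MeasureTheory Topology
open scoped Topology RealInnerProductSpace

/-- A Max Shift sequence with parameter `ε` started at `x₀`: each point maximizes `f` over the
closed ball of radius `ε` around the previous point, and the sequence becomes constant as soon
as the density value stops strictly increasing. -/
def IsMaxShiftSeq {d : ℕ} (f : Euc d → ℝ) (ε : ℝ) (x₀ : Euc d) (x : ℕ → Euc d) : Prop :=
  x 0 = x₀ ∧ ∀ k : ℕ,
    x (k+1) ∈ closedBall (x k) ε ∧
    (∀ y ∈ closedBall (x k) ε, f y ≤ f (x (k+1))) ∧
    (f (x (k+1)) = f (x k) → ∀ m, k + 1 ≤ m → x m = x (k+1))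

/-!
A nondegenerate critical point is isolated among critical points (inverse function theorem
applied to the gradient), so near the mode `x⋆` there is no other local maximum and `x⋆` is a
strict maximum. On a compact annulus around `x⋆` the density is then below its values near `x⋆`;
since a Max Shift sequence increases `f` and moves by at most `ε`, one started close to `x⋆`
can never cross that annulus and stays in a compact ball. A cluster point of the sequence
maximizes `f` over an `ε`-ball around itself, so it is a local maximum, hence `x⋆`; thus some
iterate comes within `ε` of `x⋆`, and from there the sequence jumps onto `x⋆` and stops.
-/

theorem HasStrictFDerivAt.eventually_eq_imp_eq {𝕜 E F : Type*} [NontriviallyNormedField 𝕜]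
    [NormedAddCommGroup E] [NormedSpace 𝕜 E] [CompleteSpace E]
    [NormedAddCommGroup F] [NormedSpace 𝕜 F] {g : E → F} {g' : E ≃L[𝕜] F} {a : E}
    (hg : HasStrictFDerivAt g (g' : E →L[𝕜] F) a) : ∀ᶠ y in 𝓝 a, g y = g a → y = a := by
  filter_upwards [hg.eventually_left_inverse] with y hy hya
  rw [← hy, hya, hg.localInverse_apply_image]

theorem IsLocalMax.gradient_eq_zero_s8 {E : Type*} [NormedAddCommGroup E] [InnerProductSpace ℝ E]
    [CompleteSpace E] {f : E → ℝ} {a : E} (h : IsLocalMax f a) : gradient f a = 0 := by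
  simp [gradient, h.fderiv_eq_zero]

theorem eventually_isLocalMax_imp_eq_of_hess_bijective {d : ℕ} {f : Euc d → ℝ}
    (hgrad : Differentiable ℝ (gradient f)) (hhess : Continuous (hess f)) {a : Euc d}
    (hcrit : gradient f a = 0) (hbij : Function.Bijective (hess f a)) :
    ∀ᶠ y in 𝓝 a, IsLocalMax f y → y = a := by
  let e : Euc d ≃L[ℝ] Euc d :=
    (LinearEquiv.ofBijective (hess f a : Euc d →ₗ[ℝ] Euc d) hbij).toContinuousLinearEquiv
  have hstrict : HasStrictFDerivAt (gradient f) (e : Euc d →L[ℝ] Euc d) a :=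
    (contDiff_one_iff_fderiv.mpr ⟨hgrad, hhess⟩).contDiffAt.hasStrictFDerivAt one_ne_zero
  filter_upwards [hstrict.eventually_eq_imp_eq] with y hy hmax
  exact hy (by rw [hmax.gradient_eq_zero_s8, hcrit])

theorem IsMaxOn.lt_of_unique_isLocalMax {α β : Type*} [TopologicalSpace α] [LinearOrder β]
    {f : α → β} {U : Set α} {a : α} (hU : IsOpen U) (hmax : IsMaxOn f U a)
    (huniq : ∀ y ∈ U, IsLocalMax f y → y = a) {y : α} (hy : y ∈ U) (hne : y ≠ a) :
    f y < f a := by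
  refine (hmax hy).lt_of_ne fun heq => hne (huniq y hy ?_)
  exact IsMaxOn.isLocalMax (fun z hz => heq ▸ hmax hz) (hU.mem_nhds hy)

theorem IsCompact.eventually_forall_lt {α β : Type*} [TopologicalSpace α] [LinearOrder β]
    [TopologicalSpace β] [OrderClosedTopology β] {f : α → β} (hf : Continuous f) {K : Set α}
    (hK : IsCompact K) {a : α} (hlt : ∀ y ∈ K, f y < f a) :
    ∀ᶠ x in 𝓝 a, ∀ y ∈ K, f y < f x :=
  hK.eventually_forall_of_forall_eventually fun y hy =>
    (isOpen_lt (hf.comp continuous_snd) (hf.comp continuous_fst)).mem_nhds (hlt y hy)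

namespace IsMaxShiftSeq

variable {d : ℕ} {f : Euc d → ℝ} {ε : ℝ} {x₀ : Euc d} {x : ℕ → Euc d}

theorem nonneg (h : IsMaxShiftSeq f ε x₀ x) : 0 ≤ ε :=
  dist_nonneg.trans (mem_closedBall.mp (h.2 0).1)

theorem le_of_mem_closedBall (h : IsMaxShiftSeq f ε x₀ x) (k : ℕ) {y : Euc d}
    (hy : y ∈ closedBall (x k) ε) : f y ≤ f (x (k + 1)) :=
  (h.2 k).2.1 y hy

theorem monotone (h : IsMaxShiftSeq f ε x₀ x) : Monotone (f ∘ x) :=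
  monotone_nat_of_le_succ fun k => h.le_of_mem_closedBall k (mem_closedBall_self h.nonneg)

theorem mem_ball_of_lt_on_annulus (h : IsMaxShiftSeq f ε x₀ x) {c : Euc d} {ρ R : ℝ}
    (hR : ρ + ε ≤ R) (hx₀ : x₀ ∈ ball c ρ)
    (hlt : ∀ y ∈ closedBall c R \ ball c ρ, f y < f x₀) (k : ℕ) : x k ∈ ball c ρ := by
  induction k with
  | zero => rwa [h.1]
  | succ k ih =>
    by_contra hout
    have hdist : dist (x (k + 1)) c ≤ R :=
      calc dist (x (k + 1)) c ≤ dist (x (k + 1)) (x k) + dist (x k) c := dist_triangle _ _ _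
        _ ≤ ε + ρ := add_le_add (h.2 k).1 (mem_ball.mp ih).le
        _ ≤ R := by linarith
    have hmono : f x₀ ≤ f (x (k + 1)) := h.1 ▸ h.monotone (Nat.zero_le (k + 1))
    exact (hlt _ ⟨hdist, hout⟩).not_ge hmono

theorem isMaxOn_ball_of_tendsto (h : IsMaxShiftSeq f ε x₀ x) (hf : Continuous f)
    {φ : ℕ → ℕ} (hφ : StrictMono φ) {z : Euc d} (hz : Tendsto (x ∘ φ) atTop (𝓝 z)) :
    IsMaxOn f (ball z ε) z := by
  intro w hw
  obtain ⟨j, hj⟩ := (hz.eventually (ball_mem_nhds z (sub_pos.mpr (mem_ball.mp hw)))).exists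
  have hwj : w ∈ closedBall (x (φ j)) ε := by
    have := dist_triangle w z (x (φ j))
    rw [Function.comp_apply, dist_comm] at hj
    exact mem_closedBall.mpr (by linarith)
  refine ge_of_tendsto ((hf.tendsto z).comp hz) (eventually_atTop.mpr ⟨j + 1, fun i hi => ?_⟩)
  exact (h.le_of_mem_closedBall _ hwj).trans
    (h.monotone (hφ.lt_iff_lt.mpr (Nat.lt_of_lt_of_le j.lt_succ_self hi)))

theorem exists_dist_lt_of_isCompact (h : IsMaxShiftSeq f ε x₀ x) (hε : 0 < ε)
    (hf : Continuous f) {K : Set (Euc d)} (hK : IsCompact K) (hxK : ∀ k, x k ∈ K) {p : Euc d}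
    (huniq : ∀ z ∈ K, IsLocalMax f z → z = p) : ∃ k, dist (x k) p < ε := by
  obtain ⟨z, hzK, φ, hφ, hz⟩ := hK.tendsto_subseq hxK
  obtain rfl : z = p :=
    huniq z hzK ((h.isMaxOn_ball_of_tendsto hf hφ hz).isLocalMax (ball_mem_nhds z hε))
  obtain ⟨j, hj⟩ := (hz.eventually (ball_mem_nhds z hε)).exists
  exact ⟨φ j, hj⟩

theorem eventually_eq_of_mem_closedBall (h : IsMaxShiftSeq f ε x₀ x) {S : Set (Euc d)}
    (hxS : ∀ k, x k ∈ S) {p : Euc d} (hstrict : ∀ y ∈ S, y ≠ p → f y < f p) {k : ℕ}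
    (hp : p ∈ closedBall (x k) ε) : ∀ᶠ m in atTop, x m = p := by
  have hnext : ∀ n, p ∈ closedBall (x n) ε → x (n + 1) = p := fun n hpn => by
    by_contra hne
    exact (hstrict _ (hxS (n + 1)) hne).not_ge (h.le_of_mem_closedBall n hpn)
  have h1 := hnext k hp
  have h2 := hnext (k + 1) (h1 ▸ mem_closedBall_self h.nonneg)
  refine eventually_atTop.mpr ⟨k + 1, fun m hm => ?_⟩
  rcases hm.eq_or_lt with rfl | hm
  · exact h1
  · rw [(h.2 (k + 1)).2.2 (by rw [h1, h2]) m hm, h2]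

end IsMaxShiftSeq

theorem maxShift_eventually_eq_of_unique_localMax {d : ℕ} {f : Euc d → ℝ} (hf : Continuous f)
    {a : Euc d} {r : ℝ} (hr : 0 < r) (hmax : IsMaxOn f (ball a r) a)
    (huniq : ∀ y ∈ ball a r, IsLocalMax f y → y = a) :
    ∃ δ > (0:ℝ), ∃ ε₀ > (0:ℝ), ∀ ε, 0 < ε → ε ≤ ε₀ →
      ∀ x₀ ∈ ball a δ, ∀ x : ℕ → Euc d, IsMaxShiftSeq f ε x₀ x →
        ∃ K : ℕ, ∀ m, K ≤ m → x m = a := by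
  have hstrict : ∀ y ∈ ball a r, y ≠ a → f y < f a := fun y hy =>
    hmax.lt_of_unique_isLocalMax isOpen_ball huniq hy
  have hsub : ∀ {ρ}, ρ < r → closedBall a ρ ⊆ ball a r := fun hρ => closedBall_subset_ball hρ
  have hannulus : ∀ᶠ x₀ in 𝓝 a, ∀ y ∈ closedBall a (r / 2) \ ball a (r / 4), f y < f x₀ :=
    ((isCompact_closedBall a _).diff isOpen_ball).eventually_forall_lt hf fun y hy =>
      hstrict y (hsub (by linarith) hy.1) fun hya => hy.2 (hya ▸ mem_ball_self (by positivity))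
  obtain ⟨δ, hδ, hδannulus⟩ := Metric.eventually_nhds_iff_ball.mp hannulus
  refine ⟨min δ (r / 4), by positivity, r / 4, by positivity, fun ε hε hεr x₀ hx₀ x hx => ?_⟩
  have htrapped : ∀ k, x k ∈ ball a (r / 4) :=
    hx.mem_ball_of_lt_on_annulus (by linarith) (ball_subset_ball (min_le_right _ _) hx₀)
      (hδannulus x₀ (ball_subset_ball (min_le_left _ _) hx₀))
  obtain ⟨k, hk⟩ := hx.exists_dist_lt_of_isCompact hε hf (isCompact_closedBall a (r / 4))
    (fun k => ball_subset_closedBall (htrapped k))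
    fun z hz => huniq z (hsub (by linarith) hz)
  exact eventually_atTop.mp <| hx.eventually_eq_of_mem_closedBall htrapped
    (fun y hy => hstrict y (ball_subset_ball (by linarith) hy))
    (mem_closedBall_comm.mp (mem_closedBall.mpr hk.le))

theorem maxShift_converges_to_mode_locally_general
    {d : ℕ} (f : Euc d → ℝ) (hf : IsNiceDensity f)
    (xstar : Euc d) (hmode : IsLocalMax f xstar) :
    ∃ δ > (0:ℝ), ∃ ε₀ > (0:ℝ), ∀ ε, 0 < ε → ε ≤ ε₀ →
      ∀ x₀ ∈ ball xstar δ, ∀ x : ℕ → Euc d, IsMaxShiftSeq f ε x₀ x →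
        ∃ K : ℕ, ∀ m, K ≤ m → x m = xstar := by
  obtain ⟨-, -, -, -, hgrad, -, -, -, hf_uc, -, hhess_uc, hmorse⟩ := hf
  have hcrit : gradient f xstar = 0 := hmode.gradient_eq_zero_s8
  obtain ⟨r, hr, hball⟩ := Metric.eventually_nhds_iff_ball.mp <| hmode.and <|
    eventually_isLocalMax_imp_eq_of_hess_bijective hgrad hhess_uc.continuous hcrit
      (hmorse xstar hcrit)
  exact maxShift_eventually_eq_of_unique_localMax hf_uc.continuous hr
    (fun y hy => (hball y hy).1) fun y hy => (hball y hy).2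

/-- Near a mode `x⋆`, for `ε` small enough, every Max Shift sequence started
in a small ball around `x⋆` is eventually constant equal to `x⋆`. -/
theorem maxShift_converges_to_mode_locally
    {d : ℕ} (hd : 0 < d) (f : Euc d → ℝ) (hf : IsNiceDensity f)
    (xstar : Euc d) (hmode : IsLocalMax f xstar) :
    ∃ δ > (0:ℝ), ∃ ε₀ > (0:ℝ), ∀ ε, 0 < ε → ε ≤ ε₀ →
      ∀ x₀ ∈ ball xstar δ, ∀ x : ℕ → Euc d, IsMaxShiftSeq f ε x₀ x →
        ∃ K : ℕ, ∀ m, K ≤ m → x m = xstar :=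
  maxShift_converges_to_mode_locally_general f hf xstar hmode
end
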